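/- Let e₁,…,e₆ be the standard basis of ℝ⁶, let uᵢ = 3eᵢ − e₁ − e₂ − e₃ and vᵢ = 3eᵢ − e₄ − e₅ − e₆ for 1 ≤ i ≤ 6, and let ⟨·,·⟩ be the standard inner product on ℝ⁶. Then {m ∈ ℝ⁶ : ⟨uᵢ, m⟩ ≥ −1 for all 1 ≤ i ≤ 6, and ⟨vᵢ, m⟩ ≥ 0 for all 1 ≤ i ≤ 6} = { c + t·(1,1,1,1,1,1) : c ∈ convexHull ℝ {0, e₁, e₂, e₃}, t ∈ ℝ }. -/
import Mathlib


/-- standard basis of ℝ⁶ -/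
noncomputable def e6 (i : Fin 6) : Fin 6 → ℝ := Pi.single i 1

/-- uᵢ = 3eᵢ − e₁ − e₂ − e₃ -/
noncomputable def uvec (i : Fin 6) : Fin 6 → ℝ := (3 : ℝ) • e6 i - e6 0 - e6 1 - e6 2

/-- vᵢ = 3eᵢ − e₄ − e₅ − e₆ -/
noncomputable def vvec (i : Fin 6) : Fin 6 → ℝ := (3 : ℝ) • e6 i - e6 3 - e6 4 - e6 5

lemma usum (i : Fin 6) (m : Fin 6 → ℝ) :
    ∑ j, uvec i j * m j = 3 * m i - m 0 - m 1 - m 2 := by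
  fin_cases i <;> simp [uvec, e6, Fin.sum_univ_six, Pi.single_apply] <;> ring

lemma vsum (i : Fin 6) (m : Fin 6 → ℝ) :
    ∑ j, vvec i j * m j = 3 * m i - m 3 - m 4 - m 5 := by
  fin_cases i <;> simp [vvec, e6, Fin.sum_univ_six, Pi.single_apply] <;> ring

lemma hull_sub :
    convexHull ℝ ({0, e6 0, e6 1, e6 2} : Set (Fin 6 → ℝ)) ⊆
      {c : Fin 6 → ℝ | (∀ i, 0 ≤ c i) ∧ c 0 + c 1 + c 2 ≤ 1 ∧ c 3 = 0 ∧ c 4 = 0 ∧ c 5 = 0} := by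
  apply convexHull_min
  · rintro x (rfl | rfl | rfl | rfl)
    · exact ⟨fun i => le_rfl, by norm_num, rfl, rfl, rfl⟩
    all_goals
      exact ⟨fun i => by simp only [e6, Pi.single_apply]; positivity,
        by simp [e6, Pi.single_apply], by simp [e6, Pi.single_apply],
        by simp [e6, Pi.single_apply], by simp [e6, Pi.single_apply]⟩
  · rintro x ⟨hx0, hx1, hx3, hx4, hx5⟩ y ⟨hy0, hy1, hy3, hy4, hy5⟩ a b ha hb hab
    refine ⟨fun i => ?_, ?_, ?_, ?_, ?_⟩ <;>
      simp only [Pi.add_apply, Pi.smul_apply, smul_eq_mul]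
    · exact add_nonneg (mul_nonneg ha (hx0 i)) (mul_nonneg hb (hy0 i))
    · nlinarith [hx0 0, hx0 1, hx0 2, hy0 0, hy0 1, hy0 2]
    · rw [hx3, hy3]; ring
    · rw [hx4, hy4]; ring
    · rw [hx5, hy5]; ring

lemma mem_hull (a b c : ℝ) (ha : 0 ≤ a) (hb : 0 ≤ b) (hc : 0 ≤ c) (habc : a + b + c ≤ 1) :
    a • e6 0 + b • e6 1 + c • e6 2 ∈ convexHull ℝ ({0, e6 0, e6 1, e6 2} : Set (Fin 6 → ℝ)) := by
  have h := Finset.centerMass_mem_convexHull (t := (Finset.univ : Finset (Fin 4)))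
    (w := ![1 - a - b - c, a, b, c]) (z := ![0, e6 0, e6 1, e6 2])
    (s := ({0, e6 0, e6 1, e6 2} : Set (Fin 6 → ℝ)))
    (by intro i _; fin_cases i <;> simp <;> linarith)
    (by simp [Fin.sum_univ_four]; linarith)
    (by intro i _; fin_cases i <;> simp [Set.mem_insert_iff])
  have hs : ∑ i, (![1 - a - b - c, a, b, c]) i = 1 := by
    simp [Fin.sum_univ_four]; ring
  rw [Finset.centerMass, hs] at h
  simpa [Fin.sum_univ_four] using h

theorem stmt_3 :
    {m : Fin 6 → ℝ | (∀ i, -1 ≤ ∑ j, uvec i j * m j) ∧ (∀ i, 0 ≤ ∑ j, vvec i j * m j)} =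
    {x : Fin 6 → ℝ | ∃ c ∈ convexHull ℝ ({0, e6 0, e6 1, e6 2} : Set (Fin 6 → ℝ)),
      ∃ t : ℝ, x = c + t • (fun _ => (1 : ℝ))} := by
  ext m
  simp only [Set.mem_setOf_eq]
  constructor
  · rintro ⟨h1, h2⟩
    simp only [usum, vsum] at h1 h2
    have h3 := h2 3; have h4 := h2 4; have h5 := h2 5
    have e34 : m 3 = m 4 := by linarith
    have e35 : m 3 = m 5 := by linarith
    set t := m 3 with ht
    refine ⟨(m 0 - t) • e6 0 + (m 1 - t) • e6 1 + (m 2 - t) • e6 2, ?_, t, ?_⟩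
    · exact mem_hull _ _ _ (by have := h2 0; linarith) (by have := h2 1; linarith)
        (by have := h2 2; linarith) (by have := h1 3; linarith)
    · funext j
      fin_cases j <;> simp [e6, Pi.single_apply] <;> linarith
  · rintro ⟨c, hc, t, rfl⟩
    obtain ⟨hpos, hsum, h3, h4, h5⟩ := hull_sub hc
    constructor
    · intro i
      rw [usum]
      simp only [Pi.add_apply, Pi.smul_apply, smul_eq_mul, mul_one]
      have := hpos i
      linarith
    · intro i
      rw [vsum]
      simp only [Pi.add_apply, Pi.smul_apply, smul_eq_mul, mul_one]
      have := hpos i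
      linarith
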